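/- Let $P$ be an extra special $p$-group with non-central subgroup $Q$ and let $C = C_P(Q)$. Then the number of orbits of $C$ acting by left multiplication on the $Q$-orbit sums $\{\kappa_x : x \in P \setminus C\}$ equals $|P : C| - 1$, and each orbit has size $|C : Z(P)|$. -/

import Mathlib

/-!
Since `[P, P] = Z(P)` is central, `g ↦ ⁅g, x⁆` is a homomorphism and the `Q`-conjugates of `x`
are `⁅q, x⁆ * x`. For `x ∉ C` the image of `Q` is a nontrivial subgroup of `Z(P)`, which has
prime order, so the `Q`-orbit of `x` is the coset `Z(P) x`. Left multiplication by `c ∈ C`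
commutes with `Q`-conjugation, so `c κ_x = κ_{cx}`; hence `c κ_r = κ_x` iff `x ∈ C r`, and
`c κ_r = c' κ_r` iff `c⁻¹ c' ∈ Z(P)`. The orbits are thus indexed by the right cosets of `C`
other than `C`, and each has `|C : Z(P)|` elements.
-/
set_option synthInstance.maxHeartbeats 1000000
set_option maxHeartbeats 1000000

open MonoidAlgebra Finset
open scoped Classical

/-- The centralizer algebra `kP^Q`: the subalgebra of the group algebra `kP`
fixed by the conjugation action of the subgroup `Q`. -/
noncomputable def centAlg (k : Type*) [Field k] {P : Type*} [Group P] (Q : Subgroup P) :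
    Subalgebra k (MonoidAlgebra k P) :=
  ⨅ q ∈ Q, AlgHom.equalizer
    (MonoidAlgebra.domCongr k k (MulAut.conj q : P ≃* P)).toAlgHom (AlgHom.id k _)

/-- The augmentation map `kP → k`. -/
noncomputable def aug (k : Type*) [Field k] (P : Type*) [Group P] :
    MonoidAlgebra k P →ₐ[k] k := MonoidAlgebra.lift (R := k) (M := P) (A := k) 1

/-- The Jacobson radical of a `k`-algebra, as a `k`-submodule. -/
noncomputable def jacRad (k : Type*) [Field k] (A : Type*) [Ring A] [Algebra k A] :
    Submodule k A :=
  Submodule.restrictScalars k ((⊥ : Ideal A).jacobson)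

/-- The Loewy length: the least `d` with `J^d = 0`. -/
noncomputable def llen (k : Type*) [Field k] (A : Type*) [Ring A] [Algebra k A] : ℕ :=
  sInf {d | jacRad k A ^ d = ⊥}

/-- The `Q`-conjugation orbit sum `κ_x ∈ kP`. -/
noncomputable def kappa {k : Type*} [Field k] {P : Type*} [Group P] [Fintype P]
    (Q : Subgroup P) (x : P) : MonoidAlgebra k P :=
  ∑ y ∈ Finset.univ.filter (fun y => ∃ q ∈ Q, q * x * q⁻¹ = y), MonoidAlgebra.single y 1

/-- The span `I` of the orbit sums `κ_x`, `x ∉ C_P(Q)`. -/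
noncomputable def idealI (k : Type*) [Field k] {P : Type*} [Group P] [Fintype P]
    (Q : Subgroup P) : Submodule k (MonoidAlgebra k P) :=
  Submodule.span k
    {f | ∃ x ∉ Subgroup.centralizer (Q : Set P), f = kappa Q x}

/-- The span of `C_P(Q)` inside `kP`, i.e. the subalgebra `kC_P(Q)`. -/
noncomputable def subC (k : Type*) [Field k] {P : Type*} [Group P]
    (Q : Subgroup P) : Submodule k (MonoidAlgebra k P) :=
  Submodule.span k
    {f | ∃ c ∈ Subgroup.centralizer (Q : Set P), f = MonoidAlgebra.single c (1 : k)}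

/-- The radical `J' = J(kC_P(Q))`, i.e. the augmentation-trivial part of `kC_P(Q)`. -/
noncomputable def jacC (k : Type*) [Field k] {P : Type*} [Group P]
    (Q : Subgroup P) : Submodule k (MonoidAlgebra k P) :=
  subC k Q ⊓ LinearMap.ker (aug k P).toLinearMap

open Subgroup

theorem MonoidAlgebra.sum_single_one_injective {R M : Type*} [Semiring R] [Nontrivial R] :
    Function.Injective (fun s : Finset M => ∑ m ∈ s, single m (1 : R)) := by
  intro s t hst
  ext m
  have hm := congr(($hst).coeff m)
  simp only [coeff_sum, coeff_single, Finsupp.finsetSum_apply, Finsupp.single_apply,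
    Finset.sum_ite_eq'] at hm
  by_cases hs : m ∈ s <;> by_cases ht : m ∈ t <;> simp_all

theorem Subgroup.exists_finset_rightTransversal_erase_one {G : Type*} [Group G] [Finite G]
    (H : Subgroup G) :
    ∃ reps : Finset G, (∀ r ∈ reps, r ∉ H) ∧ reps.card = H.index - 1 ∧
      ∀ x ∉ H, ∃! r, r ∈ reps ∧ x * r⁻¹ ∈ H := by
  obtain ⟨T, hT, h1⟩ := H.exists_isComplement_right 1
  have hTu := isComplement_iff_existsUnique_mul_inv_mem.mp hT
  have hfin : T.Finite := Set.toFinite T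
  refine ⟨hfin.toFinset.erase 1, fun r hr hrH => ?_, ?_, fun x hx => ?_⟩
  · obtain ⟨hr1, hrT⟩ := Finset.mem_erase.mp hr
    have := (hTu r).unique (y₁ := ⟨r, hfin.mem_toFinset.mp hrT⟩) (y₂ := ⟨1, h1⟩)
      (by simp) (by simpa using hrH)
    exact hr1 congr(($this).1)
  · rw [Finset.card_erase_of_mem (hfin.mem_toFinset.mpr h1), ← Set.ncard_eq_toFinset_card T,
      hT.ncard_right]
  · obtain ⟨⟨t, ht⟩, hxt, huniq⟩ := hTu x
    have ht1 : t ≠ 1 := by rintro rfl; simp_all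
    refine ⟨t, ⟨Finset.mem_erase.mpr ⟨ht1, hfin.mem_toFinset.mpr ht⟩, hxt⟩, ?_⟩
    rintro r ⟨hr, hxr⟩
    exact congr(($(huniq ⟨r, hfin.mem_toFinset.mp (Finset.mem_of_mem_erase hr)⟩ hxr)).1)

theorem Subgroup.card_range_eq_index {G α : Type*} [Group G] (H : Subgroup G) (f : G → α)
    (hf : ∀ a b, f a = f b ↔ a⁻¹ * b ∈ H) : Nat.card (Set.range f) = H.index := by
  have hker : Setoid.ker f = QuotientGroup.leftRel H :=
    Setoid.ext fun a b => (hf a b).trans QuotientGroup.leftRel_apply.symm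
  rw [← Nat.card_congr (Setoid.quotientKerEquivRange f), hker]
  rfl

open scoped commutatorElement in
def commutatorHom {P : Type*} [Group P] (hZ : commutator P ≤ center P) (x : P) : P →* P where
  toFun g := ⁅g, x⁆
  map_one' := by simp
  map_mul' g h := by
    have hcomm : ∀ g : P, ⁅g, x⁆ ∈ center P := fun g =>
      hZ (commutator_mem_commutator (mem_top g) (mem_top x))
    calc ⁅g * h, x⁆ = g * ⁅h, x⁆ * (x * g⁻¹ * x⁻¹) := by group
      _ = ⁅h, x⁆ * ⁅g, x⁆ := by rw [mem_center_iff.mp (hcomm h) g]; group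
      _ = ⁅g, x⁆ * ⁅h, x⁆ := mem_center_iff.mp (hcomm g) _

section

variable {k : Type*} [Field k] {P : Type*} [Group P] [Fintype P] {Q : Subgroup P}

theorem single_mul_kappa {c : P} (hc : c ∈ centralizer (Q : Set P)) (x : P) :
    single c (1 : k) * kappa Q x = kappa Q (c * x) := by
  have hcomm : ∀ q ∈ Q, q * (c * x) * q⁻¹ = c * (q * x * q⁻¹) := fun q hq => by
    rw [← mul_assoc q c x, mem_centralizer_iff.mp hc q hq]
    group
  have horbit : Finset.univ.filter (fun y => ∃ q ∈ Q, q * (c * x) * q⁻¹ = y) =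
      (Finset.univ.filter (fun y => ∃ q ∈ Q, q * x * q⁻¹ = y)).map (mulLeftEmbedding c) := by
    ext y
    simp only [Finset.mem_filter, Finset.mem_univ, true_and, Finset.mem_map,
      mulLeftEmbedding_apply]
    constructor
    · rintro ⟨q, hq, rfl⟩
      exact ⟨_, ⟨q, hq, rfl⟩, (hcomm q hq).symm⟩
    · rintro ⟨_, ⟨q, hq, rfl⟩, rfl⟩
      exact ⟨q, hq, hcomm q hq⟩
  simp only [kappa, Finset.mul_sum, horbit, Finset.sum_map, mulLeftEmbedding_apply,
    single_mul_single, one_mul]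

open scoped commutatorElement in
theorem map_commutatorHom_eq_center (hZ : commutator P ≤ center P)
    (hp : (Nat.card (center P)).Prime) {x : P} (hx : x ∉ centralizer (Q : Set P)) :
    Q.map (commutatorHom hZ x) = center P := by
  have hle : Q.map (commutatorHom hZ x) ≤ center P := by
    rintro _ ⟨q, -, rfl⟩
    exact hZ (commutator_mem_commutator (mem_top q) (mem_top x))
  have hne : Nat.card (Q.map (commutatorHom hZ x)) ≠ 1 := by
    obtain ⟨q, hq, hqx⟩ := not_forall₂.mp (mt mem_centralizer_iff.mpr hx)
    intro h1
    apply hqx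
    rw [← commutatorElement_eq_one_iff_mul_comm, ← mem_bot, ← eq_bot_of_card_eq _ h1]
    exact mem_map_of_mem _ hq
  refine eq_of_le_of_card_ge hle ?_
  rcases (Nat.dvd_prime hp).mp (card_dvd_of_le hle) with h | h
  · exact absurd h hne
  · exact h.ge

theorem exists_conj_eq_iff_mul_inv_mem_center (hZ : commutator P ≤ center P)
    (hp : (Nat.card (center P)).Prime) {x : P} (hx : x ∉ centralizer (Q : Set P)) (y : P) :
    (∃ q ∈ Q, q * x * q⁻¹ = y) ↔ y * x⁻¹ ∈ center P := by
  rw [← map_commutatorHom_eq_center hZ hp hx, Subgroup.mem_map]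
  refine exists_congr fun q => and_congr_right fun _ => ?_
  rw [eq_mul_inv_iff_mul_eq]
  change _ ↔ q * x * q⁻¹ * x⁻¹ * x = y
  rw [inv_mul_cancel_right]

theorem kappa_eq_kappa_iff (hZ : commutator P ≤ center P) (hp : (Nat.card (center P)).Prime)
    {x x' : P} (hx : x ∉ centralizer (Q : Set P)) (hx' : x' ∉ centralizer (Q : Set P)) :
    (kappa Q x : MonoidAlgebra k P) = kappa Q x' ↔ x' * x⁻¹ ∈ center P := by
  have hcoset : ∀ {x : P}, x ∉ centralizer (Q : Set P) →
      Finset.univ.filter (fun y => ∃ q ∈ Q, q * x * q⁻¹ = y) =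
        Finset.univ.filter (fun y => Quotient.mk (QuotientGroup.rightRel (center P)) x = ⟦y⟧) :=
    fun hx => Finset.filter_congr fun y _ => by
      rw [exists_conj_eq_iff_mul_inv_mem_center hZ hp hx, Quotient.eq,
        QuotientGroup.rightRel_apply]
  rw [← QuotientGroup.rightRel_apply, ← Quotient.eq, kappa, kappa, hcoset hx, hcoset hx',
    MonoidAlgebra.sum_single_one_injective.eq_iff]
  exact ⟨fun h => by simpa using (Finset.ext_iff.mp h x').mpr, fun h => by rw [h]⟩

theorem exists_single_mul_kappa_eq_iff (hZ : commutator P ≤ center P)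
    (hp : (Nat.card (center P)).Prime) {r x : P} (hr : r ∉ centralizer (Q : Set P))
    (hx : x ∉ centralizer (Q : Set P)) :
    (∃ c ∈ centralizer (Q : Set P), single c (1 : k) * kappa Q r = kappa Q x) ↔
      x * r⁻¹ ∈ centralizer (Q : Set P) := by
  constructor
  · rintro ⟨c, hc, h⟩
    rw [single_mul_kappa hc, kappa_eq_kappa_iff hZ hp ((mul_mem_cancel_left hc).not.mpr hr) hx]
      at h
    rw [show x * r⁻¹ = x * (c * r)⁻¹ * c by group]
    exact mul_mem (center_le_centralizer _ h) hc
  · intro h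
    exact ⟨x * r⁻¹, h, by rw [single_mul_kappa h, inv_mul_cancel_right]⟩

theorem ncard_single_mul_kappa (hZ : commutator P ≤ center P)
    (hp : (Nat.card (center P)).Prime) {r : P} (hr : r ∉ centralizer (Q : Set P)) :
    {g : MonoidAlgebra k P | ∃ c ∈ centralizer (Q : Set P), g = single c 1 * kappa Q r}.ncard =
      (center P).relIndex (centralizer (Q : Set P)) := by
  have hrange : {g : MonoidAlgebra k P | ∃ c ∈ centralizer (Q : Set P),
      g = single c 1 * kappa Q r} =
      Set.range fun c : centralizer (Q : Set P) => (kappa Q ((c : P) * r) : MonoidAlgebra k P) := by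
    ext g
    simp only [Set.mem_ofPred_eq, Set.mem_range, Subtype.exists, exists_prop]
    exact exists_congr fun c => and_congr_right fun hc => by rw [single_mul_kappa hc, eq_comm]
  rw [hrange, ← Nat.card_coe_set_eq, relIndex]
  refine card_range_eq_index _ _ fun a b => ?_
  have hnot : ∀ c : centralizer (Q : Set P), (c : P) * r ∉ centralizer (Q : Set P) :=
    fun c => (mul_mem_cancel_left c.2).not.mpr hr
  rw [kappa_eq_kappa_iff hZ hp (hnot a) (hnot b), mem_subgroupOf, Subgroup.coe_mul,
    Subgroup.coe_inv, mul_inv_rev, ← mul_assoc, mul_inv_cancel_right,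
    instNormalCenter.mem_comm_iff]

end

theorem stmt_12_general {p : ℕ} [Fact p.Prime] (k : Type*) [Field k]
    {P : Type*} [Group P] [Fintype P]
    (hZC : Subgroup.center P = commutator P)
    (hcard : Nat.card (Subgroup.center P) = p)
    (Q : Subgroup P) :
    ∃ reps : Finset P,
      (∀ r ∈ reps, r ∉ Subgroup.centralizer (Q : Set P)) ∧
      reps.card = (Subgroup.centralizer (Q : Set P)).index - 1 ∧
      (∀ x ∉ Subgroup.centralizer (Q : Set P), ∃! r, r ∈ reps ∧
        ∃ c ∈ Subgroup.centralizer (Q : Set P),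
          MonoidAlgebra.single c (1 : k) * kappa Q r = kappa Q x) ∧
      (∀ r ∈ reps,
        Set.ncard {g : MonoidAlgebra k P | ∃ c ∈ Subgroup.centralizer (Q : Set P),
            g = MonoidAlgebra.single c (1 : k) * kappa Q r} =
          (Subgroup.center P).relIndex (Subgroup.centralizer (Q : Set P))) := by
  have hZ : commutator P ≤ center P := hZC.ge
  have hp : (Nat.card (center P)).Prime := hcard ▸ Fact.out
  obtain ⟨reps, hreps, hcard_reps, hunique⟩ :=
    (centralizer (Q : Set P)).exists_finset_rightTransversal_erase_one
  refine ⟨reps, hreps, hcard_reps, fun x hx => ?_,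
    fun r hr => ncard_single_mul_kappa hZ hp (hreps r hr)⟩
  refine (existsUnique_congr fun r => and_congr_right fun hr => ?_).mpr (hunique x hx)
  exact exists_single_mul_kappa_eq_iff hZ hp (hreps r hr) hx

theorem stmt_12 {p : ℕ} [Fact p.Prime] (k : Type*) [Field k] [CharP k p]
    {P : Type*} [Group P] [Fintype P] (hP : IsPGroup p P)
    (hZC : Subgroup.center P = commutator P) (hZF : Subgroup.center P = frattini P)
    (hcard : Nat.card (Subgroup.center P) = p)
    (Q : Subgroup P) (hQ : ¬ Q ≤ Subgroup.center P) :
    ∃ reps : Finset P,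
      (∀ r ∈ reps, r ∉ Subgroup.centralizer (Q : Set P)) ∧
      reps.card = (Subgroup.centralizer (Q : Set P)).index - 1 ∧
      (∀ x ∉ Subgroup.centralizer (Q : Set P), ∃! r, r ∈ reps ∧
        ∃ c ∈ Subgroup.centralizer (Q : Set P),
          MonoidAlgebra.single c (1 : k) * kappa Q r = kappa Q x) ∧
      (∀ r ∈ reps,
        Set.ncard {g : MonoidAlgebra k P | ∃ c ∈ Subgroup.centralizer (Q : Set P),
            g = MonoidAlgebra.single c (1 : k) * kappa Q r} =
          (Subgroup.center P).relIndex (Subgroup.centralizer (Q : Set P))) :=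
  stmt_12_general k hZC hcard Q
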